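/- arXiv:1807.05134 — 5 statements merged into one kernel-verified Lean document; each statement's English description precedes it below -/
import Mathlib

section
/- A traceless complex 4×4 matrix M satisfies [y₀, M] = 0 if and only if there exist a, b, c, d, e ∈ ℂ with M = B(a,b,c,d,e) − x₀. Equivalently, the Slodowy slice x₀ + ker(ad(y₀)) in sl(4,ℂ) equals exactly the set of matrices B(a,b,c,d,e) with a, b, c, d, e ∈ ℂ. -/
/-!
Left multiplication by the nilpotent `y₀` moves rows 2, 3 of a matrix to rows 3, 4, and right
multiplication moves columns 3, 4 to columns 2, 3, so `[y₀, M] = 0` is a system of linear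
equations among the entries of `M`. Solving it, the centralizer of `y₀` in `gl(4,ℂ)` is the
six-parameter family with rows `(p, b, 0, 0), (0, a, 0, 0), (0, c, a, 0), (d, e, c, a)`.
Tracelessness forces `p = -3a`, and these are exactly the matrices `B(a,b,c,d,e) - x₀`.
-/

noncomputable section

/-- `x₀ = E₂₃ + E₃₄` in `sl(4,ℂ)`. -/
def x0 : Matrix (Fin 4) (Fin 4) ℂ :=
  !![0,0,0,0; 0,0,1,0; 0,0,0,1; 0,0,0,0]

/-- `y₀ = E₃₂ + E₄₃` in `sl(4,ℂ)`. -/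
def y0 : Matrix (Fin 4) (Fin 4) ℂ :=
  !![0,0,0,0; 0,0,0,0; 0,1,0,0; 0,0,1,0]

def Bmat (a b c d e : ℂ) : Matrix (Fin 4) (Fin 4) ℂ :=
  !![-3*a, b, 0, 0; 0, a, 1, 0; 0, c, a, 1; d, e, c, a]

def y0Commutant (p a b c d e : ℂ) : Matrix (Fin 4) (Fin 4) ℂ :=
  !![p, b, 0, 0; 0, a, 0, 0; 0, c, a, 0; d, e, c, a]

theorem y0_mul (M : Matrix (Fin 4) (Fin 4) ℂ) :
    y0 * M = !![0, 0, 0, 0; 0, 0, 0, 0;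
      M 1 0, M 1 1, M 1 2, M 1 3; M 2 0, M 2 1, M 2 2, M 2 3] := by
  ext i j
  fin_cases i <;> fin_cases j <;> simp [y0, Matrix.mul_apply, Fin.sum_univ_four]

theorem mul_y0 (M : Matrix (Fin 4) (Fin 4) ℂ) :
    M * y0 = !![0, M 0 2, M 0 3, 0; 0, M 1 2, M 1 3, 0;
      0, M 2 2, M 2 3, 0; 0, M 3 2, M 3 3, 0] := by
  ext i j
  fin_cases i <;> fin_cases j <;> simp [y0, Matrix.mul_apply, Fin.sum_univ_four]

theorem commute_y0_iff (M : Matrix (Fin 4) (Fin 4) ℂ) :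
    Commute y0 M ↔ ∃ p a b c d e : ℂ, M = y0Commutant p a b c d e := by
  rw [commute_iff_eq, y0_mul, mul_y0, ← Matrix.ext_iff]
  simp only [Matrix.of_apply, Matrix.cons_val', Matrix.cons_val_fin_one, Fin.forall_fin_succ,
    Matrix.cons_val_zero, Matrix.cons_val_succ, forall_const, and_true, true_and]
  constructor
  · rintro ⟨⟨h02, h03⟩, ⟨h12, h13⟩, ⟨h10, h11, -, -⟩, h20, h21, h22, h23⟩
    refine ⟨M 0 0, M 1 1, M 0 1, M 2 1, M 3 0, M 3 1, ?_⟩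
    ext i j
    fin_cases i <;> fin_cases j <;>
      simp [y0Commutant, ← h02, ← h03, ← h12, h13, h10, ← h11, h20, ← h21, ← h22, h23]
  · rintro ⟨p, a, b, c, d, e, rfl⟩
    simp [y0Commutant]

theorem trace_y0Commutant (p a b c d e : ℂ) :
    (y0Commutant p a b c d e).trace = p + 3 * a := by
  rw [Matrix.trace, Fin.sum_univ_four]
  simp only [y0Commutant, Matrix.diag_apply, Matrix.of_apply, Matrix.cons_val', Matrix.cons_val_zero,
    Matrix.cons_val_fin_one, Matrix.cons_val_one, Matrix.cons_val]
  ring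

theorem Bmat_sub_x0 (a b c d e : ℂ) :
    Bmat a b c d e - x0 = y0Commutant (-3 * a) a b c d e := by
  ext i j
  fin_cases i <;> fin_cases j <;> simp [Bmat, x0, y0Commutant]

/-- A traceless `4 × 4` matrix `M` satisfies `[y₀, M] = 0` iff `M = B(a,b,c,d,e) − x₀` for some
`a, b, c, d, e ∈ ℂ`; i.e. the Slodowy slice `x₀ + ker ad(y₀)` in `sl(4,ℂ)` consists exactly of
the matrices `B(a,b,c,d,e)`. -/
theorem slodowy_slice_sl4 (M : Matrix (Fin 4) (Fin 4) ℂ) (hM : M.trace = 0) :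
    y0 * M - M * y0 = 0 ↔ ∃ a b c d e : ℂ, M = Bmat a b c d e - x0 := by
  simp only [sub_eq_zero, ← commute_iff_eq, commute_y0_iff, Bmat_sub_x0]
  constructor
  · rintro ⟨p, a, b, c, d, e, rfl⟩
    obtain rfl : p = -3 * a := by
      rw [trace_y0Commutant] at hM
      linear_combination hM
    exact ⟨a, b, c, d, e, rfl⟩
  · rintro ⟨a, b, c, d, e, rfl⟩
    exact ⟨-3 * a, a, b, c, d, e, rfl⟩
end
end

section
/- For all a, b, c, d, e ∈ ℂ, the involution τ(A) = −g₀ Aᵀ g₀ maps the Slodowy slice to itself, with the explicit formula τ(B(a,b,c,d,e)) = B(−a, d, c, b, −e). -/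
/-! `g₀` is the signed permutation matrix of the transposition `σ = (2 4)` (`Equiv.swap 1 3`
on `Fin 4`) with signs `ε = (1, -1, 1, -1)`, so `τ` is a signed transpose twisted by `σ`:
`τ(A)ᵢⱼ = -εᵢ εⱼ A_{σj, σi}`. Reading off the entries of `B(a,b,c,d,e)` gives the formula. -/

noncomputable section

/-- `g₀ = E₁₁ + E₃₃ − E₂₄ − E₄₂`. -/
def g0 : Matrix (Fin 4) (Fin 4) ℂ :=
  !![1,0,0,0; 0,0,0,-1; 0,0,1,0; 0,-1,0,0]

/-- `τ(A) = −g₀ Aᵀ g₀`. -/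
def tau (A : Matrix (Fin 4) (Fin 4) ℂ) : Matrix (Fin 4) (Fin 4) ℂ :=
  -(g0 * A.transpose * g0)

open Matrix

namespace Matrix

variable {n α : Type*} [Fintype n] [DecidableEq n] [Semiring α]

def signedPerm (σ : Equiv.Perm n) (ε : n → α) : Matrix n n α :=
  σ.toPEquiv.toMatrix * diagonal ε

theorem signedPerm_mul_mul_signedPerm_apply (σ : Equiv.Perm n) (ε : n → α) (M : Matrix n n α)
    (i j : n) :
    (signedPerm σ ε * M * signedPerm σ ε) i j = ε (σ i) * M (σ i) (σ.symm j) * ε j := by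
  rw [signedPerm, ← Matrix.mul_assoc, mul_diagonal, PEquiv.mul_toMatrix_toPEquiv, submatrix_apply,
    Matrix.mul_assoc, PEquiv.toMatrix_toPEquiv_mul, submatrix_apply, diagonal_mul]
  rfl

end Matrix

theorem g0_eq_signedPerm : g0 = signedPerm (Equiv.swap 1 3) ![1, -1, 1, -1] := by
  ext i j
  fin_cases i <;> fin_cases j <;> simp [g0, signedPerm, Equiv.swap_apply_def]

theorem tau_apply (A : Matrix (Fin 4) (Fin 4) ℂ) (i j : Fin 4) :
    tau A i j = -(![1, -1, 1, -1] (Equiv.swap 1 3 i) * A (Equiv.swap 1 3 j) (Equiv.swap 1 3 i) *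
      ![1, -1, 1, -1] j) := by
  rw [tau, g0_eq_signedPerm, neg_apply, signedPerm_mul_mul_signedPerm_apply, transpose_apply,
    Equiv.symm_swap]

/-- The involution `τ` maps the Slodowy slice to itself:
`τ(B(a,b,c,d,e)) = B(−a, d, c, b, −e)`. -/
theorem tau_Bmat (a b c d e : ℂ) :
    tau (Bmat a b c d e) = Bmat (-a) d c b (-e) := by
  ext i j
  rw [tau_apply]
  fin_cases i <;> fin_cases j <;> simp [Bmat, Equiv.swap_apply_def]
end
end

section
/- A matrix M ∈ 𝔰𝔬(5,ℂ) satisfies [y, M] = 0 if and only if there exist a, b, c, d ∈ ℂ with M = C(a,b,c,d) − x. Equivalently, the Slodowy slice x + ker(ad(y)) in 𝔰𝔬(5,ℂ) equals exactly the set of matrices C(a,b,c,d) with a, b, c, d ∈ ℂ. -/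
/-!
`J5` is the permutation matrix of `σ = (1 3)(2 4)` (indices counted from `0`), so
`M ∈ 𝔰𝔬(5)` means `M i j = -M (σ j) (σ i)`, and such an `M` is determined by ten free entries.
For this general element the commutator `y * M - M * y` is twice a matrix of linear forms in the
ten parameters, and it vanishes exactly when six of them are killed: `r = s = u = w = k = 0` and
`z = -q`. The four survivors are the coordinates `(a, b, c, d)` of `C(a,b,c,d) - x`, which is linear
in them because the constant part of `C` is `x`.
-/

noncomputable section

/-- The symmetric bilinear form matrix `J = E₁₁ + E₂₄ + E₄₂ + E₃₅ + E₅₃`. -/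
def J5 : Matrix (Fin 5) (Fin 5) ℂ :=
  !![1,0,0,0,0; 0,0,0,1,0; 0,0,0,0,1; 0,1,0,0,0; 0,0,1,0,0]

/-- The subregular nilpotent `x` with nonzero entries `x₁₄ = 1, x₂₁ = −1, x₂₃ = 1, x₅₄ = −1`. -/
def x5 : Matrix (Fin 5) (Fin 5) ℂ :=
  !![0,0,0,1,0; -1,0,1,0,0; 0,0,0,0,0; 0,0,0,0,0; 0,0,0,-1,0]

/-- The nilpotent `y` with nonzero entries `y₁₂ = −2, y₄₁ = 2, y₄₃ = −2, y₅₂ = 2`. -/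
def y5 : Matrix (Fin 5) (Fin 5) ℂ :=
  !![0,-2,0,0,0; 0,0,0,0,0; 0,0,0,0,0; 2,0,-2,0,0; 0,2,0,0,0]

/-- The matrix `C(a,b,c,d)` with rows
`(0, −a, −b, 1, 0), (−1, 0, 1, 0, 0), (0, c, −b, 0, 0), (a, 0, d, 0, −c), (b, −d, 0, −1, b)`. -/
def Cmat (a b c d : ℂ) : Matrix (Fin 5) (Fin 5) ℂ :=
  !![0, -a, -b, 1, 0; -1, 0, 1, 0, 0; 0, c, -b, 0, 0; a, 0, d, 0, -c; b, -d, 0, -1, b]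

open scoped Matrix

def so5Param (p q r s t u v w z k : ℂ) : Matrix (Fin 5) (Fin 5) ℂ :=
  !![0, -p, -q, -r, -s; r, u, w, 0, -k; s, v, z, k, 0; p, 0, -t, -u, -v; q, t, 0, -w, -z]

def so5Swap : Equiv.Perm (Fin 5) := Equiv.swap 1 3 * Equiv.swap 2 4

theorem so5Swap_so5Swap (i : Fin 5) : so5Swap (so5Swap i) = i := by
  fin_cases i <;> rfl

theorem J5_mul_apply (M : Matrix (Fin 5) (Fin 5) ℂ) (i j : Fin 5) :
    (J5 * M) i j = M (so5Swap i) j := by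
  fin_cases i <;> simp [J5, so5Swap, Matrix.mul_apply, Fin.sum_univ_five, Equiv.swap_apply_def]

theorem transpose_mul_J5_apply (M : Matrix (Fin 5) (Fin 5) ℂ) (i j : Fin 5) :
    (Mᵀ * J5) i j = M (so5Swap j) i := by
  fin_cases j <;> simp [J5, so5Swap, Matrix.mul_apply, Fin.sum_univ_five, Equiv.swap_apply_def]

theorem apply_eq_neg_apply_so5Swap {M : Matrix (Fin 5) (Fin 5) ℂ} (hM : Mᵀ * J5 = -(J5 * M))
    (i j : Fin 5) : M i j = -M (so5Swap j) (so5Swap i) := by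
  simpa [transpose_mul_J5_apply, J5_mul_apply, so5Swap_so5Swap] using
    congrFun₂ hM j (so5Swap i)

theorem exists_eq_so5Param {M : Matrix (Fin 5) (Fin 5) ℂ} (hM : Mᵀ * J5 = -(J5 * M)) :
    ∃ p q r s t u v w z k, M = so5Param p q r s t u v w z k := by
  refine ⟨M 3 0, M 4 0, M 1 0, M 2 0, M 4 1, M 1 1, M 2 1, M 1 2, M 2 2, M 2 3, ?_⟩
  ext i j
  have h := apply_eq_neg_apply_so5Swap hM i j
  fin_cases i <;> fin_cases j <;>
    first | rfl | simpa [so5Param, so5Swap, Equiv.swap_apply_def, self_eq_neg] using h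

theorem y5_mul_so5Param_sub_so5Param_mul_y5 (p q r s t u v w z k : ℂ) :
    y5 * so5Param p q r s t u v w z k - so5Param p q r s t u v w z k * y5 =
      (2 : ℂ) • !![0, s - u, -(r + w), 0, k; 0, r + k, 0, 0, 0; -k, s, k, 0, 0;
        u - s, 0, -(q + z + u), -(r + k), -s; r + w, q + z + u, 0, 0, -k] := by
  ext i j
  fin_cases i <;> fin_cases j <;> simp [so5Param, y5] <;> ring

theorem y5_mul_so5Param_sub_so5Param_mul_y5_eq_zero_iff (p q r s t u v w z k : ℂ) :
    y5 * so5Param p q r s t u v w z k - so5Param p q r s t u v w z k * y5 = 0 ↔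
      r = 0 ∧ s = 0 ∧ u = 0 ∧ w = 0 ∧ k = 0 ∧ z = -q := by
  rw [y5_mul_so5Param_sub_so5Param_mul_y5, smul_eq_zero_iff_right two_ne_zero, ← Matrix.ext_iff]
  simp only [Fin.forall_fin_succ, Matrix.of_apply, Matrix.cons_val', Matrix.cons_val_fin_one,
    Matrix.zero_apply, Matrix.cons_val_zero, Matrix.cons_val_succ, IsEmpty.forall_iff]
  grind

theorem so5Param_eq_Cmat_sub_x5_iff (p q r s t u v w z k a b c d : ℂ) :
    so5Param p q r s t u v w z k = Cmat a b c d - x5 ↔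
      p = a ∧ q = b ∧ r = 0 ∧ s = 0 ∧ t = -d ∧ u = 0 ∧ v = c ∧ w = 0 ∧ z = -b ∧ k = 0 := by
  rw [← Matrix.ext_iff]
  simp only [so5Param, Cmat, x5, Fin.forall_fin_succ, Matrix.of_apply, Matrix.cons_val',
    Matrix.cons_val_fin_one, Matrix.sub_apply, Matrix.cons_val_zero, Matrix.cons_val_succ,
    IsEmpty.forall_iff]
  grind

/-- A matrix `M ∈ 𝔰𝔬(5,ℂ)` satisfies `[y, M] = 0` iff `M = C(a,b,c,d) − x` for some
`a, b, c, d ∈ ℂ`; i.e. the Slodowy slice `x + ker ad(y)` in `𝔰𝔬(5,ℂ)` consists exactly of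
the matrices `C(a,b,c,d)`. -/
theorem slodowy_slice_so5 (M : Matrix (Fin 5) (Fin 5) ℂ)
    (hM : M.transpose * J5 = -(J5 * M)) :
    y5 * M - M * y5 = 0 ↔ ∃ a b c d : ℂ, M = Cmat a b c d - x5 := by
  obtain ⟨p, q, r, s, t, u, v, w, z, k, rfl⟩ := exists_eq_so5Param hM
  simp only [y5_mul_so5Param_sub_so5Param_mul_y5_eq_zero_iff, so5Param_eq_Cmat_sub_x5_iff]
  constructor
  · rintro ⟨rfl, rfl, rfl, rfl, rfl, rfl⟩
    exact ⟨p, q, v, -t, by simp⟩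
  · rintro ⟨a, b, c, d, rfl, rfl, rfl, rfl, -, rfl, -, rfl, rfl, rfl⟩
    exact ⟨rfl, rfl, rfl, rfl, rfl, rfl⟩
end
end

section
/- The map (a,b,c,d,e) ↦ (−3a, b, d) restricts to a bijection from the zero fiber of the adjoint quotient on the sl(4,ℂ) Slodowy slice, i.e., the set {(a,b,c,d,e) ∈ ℂ⁵ : c = −3a², e = 20a³, bd = −81a⁴}, onto the A₃-surface singularity {(x,y,z) ∈ ℂ³ : x⁴ + yz = 0}. -/
/-!
On the zero fiber the coordinates `c` and `e` are polynomials in `a`, so forgetting them identifies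
the fiber with the surface `b d = -81 a⁴` in `(a, b, d)`-space. Since `(-3a)⁴ = 81 a⁴`, the
rescaling `x = -3a` (invertible once `3 ≠ 0`) carries this surface onto `x⁴ + y z = 0`.
-/

namespace SlodowySliceSL4

/-- The nilpotent points `(a, b, c, d, e)` of the slice, i.e. those where the characteristic
polynomial of `B(a, b, c, d, e)` is `X⁴`. -/
def zeroFiber (R : Type*) [CommRing R] : Set (R × R × R × R × R) :=
  {p | p.2.2.1 = -3 * p.1 ^ 2 ∧ p.2.2.2.2 = 20 * p.1 ^ 3 ∧ p.2.1 * p.2.2.2.1 = -81 * p.1 ^ 4}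

def a3Singularity (R : Type*) [CommRing R] : Set (R × R × R) :=
  {q | q.1 ^ 4 + q.2.1 * q.2.2 = 0}

def toA3 {R : Type*} [CommRing R] (p : R × R × R × R × R) : R × R × R :=
  (-3 * p.1, p.2.1, p.2.2.2.1)

theorem mapsTo_toA3 (R : Type*) [CommRing R] :
    Set.MapsTo toA3 (zeroFiber R) (a3Singularity R) := by
  rintro ⟨a, b, c, d, e⟩ ⟨-, -, hbd⟩
  change (-3 * a) ^ 4 + b * d = 0
  linear_combination hbd

variable {K : Type*} [Field K]

theorem injOn_toA3 (h3 : (3 : K) ≠ 0) : Set.InjOn toA3 (zeroFiber K) := by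
  rintro ⟨a, b, c, d, e⟩ ⟨hc, he, -⟩ ⟨a', b', c', d', e'⟩ ⟨hc', he', -⟩ h
  obtain ⟨ha, rfl, rfl⟩ : -3 * a = -3 * a' ∧ b = b' ∧ d = d' := by
    simpa only [toA3, Prod.mk.injEq] using h
  obtain rfl : a = a' := mul_left_cancel₀ (neg_ne_zero.mpr h3) ha
  dsimp only at hc he hc' he'
  rw [hc, he, hc', he']

theorem surjOn_toA3 (h3 : (3 : K) ≠ 0) : Set.SurjOn toA3 (zeroFiber K) (a3Singularity K) := by
  rintro ⟨x, y, z⟩ hq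
  refine ⟨(-x / 3, y, -3 * (-x / 3) ^ 2, z, 20 * (-x / 3) ^ 3), ⟨rfl, rfl, ?_⟩, ?_⟩
  · change x ^ 4 + y * z = 0 at hq
    change y * z = -81 * (-x / 3) ^ 4
    field_simp
    linear_combination 81 * hq
  · change (-3 * (-x / 3), y, z) = (x, y, z)
    rw [neg_div, neg_mul_neg, mul_div_cancel₀ x h3]

theorem bijOn_toA3 (h3 : (3 : K) ≠ 0) : Set.BijOn toA3 (zeroFiber K) (a3Singularity K) :=
  ⟨mapsTo_toA3 K, injOn_toA3 h3, surjOn_toA3 h3⟩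

end SlodowySliceSL4

/-- The map `(a,b,c,d,e) ↦ (−3a, b, d)` is a bijection from the zero fiber
`{c = −3a², e = 20a³, bd = −81a⁴}` of the adjoint quotient on the `sl(4,ℂ)` Slodowy slice
onto the `A₃`-surface singularity `{x⁴ + yz = 0}`. -/
theorem zero_fiber_sl4_is_A3 :
    Set.BijOn (fun p : ℂ × ℂ × ℂ × ℂ × ℂ => ((-3 * p.1, p.2.1, p.2.2.2.1) : ℂ × ℂ × ℂ))
      {p : ℂ × ℂ × ℂ × ℂ × ℂ |
        p.2.2.1 = -3 * p.1 ^ 2 ∧ p.2.2.2.2 = 20 * p.1 ^ 3 ∧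
          p.2.1 * p.2.2.2.1 = -81 * p.1 ^ 4}
      {q : ℂ × ℂ × ℂ | q.1 ^ 4 + q.2.1 * q.2.2 = 0} :=
  SlodowySliceSL4.bijOn_toA3 three_ne_zero
end

section
/- The map (a,b,c,d) ↦ (b, c, b² + c − 2d) restricts to a bijection from the zero fiber of the adjoint quotient on the 𝔰𝔬(5,ℂ) Slodowy slice, i.e., the set {(a,b,c,d) ∈ ℂ⁴ : a = −c − b²/2 and b⁴ + c(b² − 2d + c) = 0}, onto the A₃-surface singularity {(x,y,z) ∈ ℂ³ : x⁴ + yz = 0}. -/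
/-!
With `z = b² + c − 2d`, the second equation of the zero fiber is `b⁴ + c z = 0`, the equation of
the `A₃` surface in the coordinates `(b, c, z)`. The first equation recovers `a` from `(b, c)`,
and `d = (b² + c − z) / 2` is recovered from `z` as long as `2` is invertible.
-/

namespace SlodowySliceSO5

open Set

variable {K : Type*} [Field K]

variable (K) in
def zeroFiber : Set (K × K × K × K) :=
  {p | p.1 = -p.2.2.1 - p.2.1 ^ 2 / 2 ∧
    p.2.1 ^ 4 + p.2.2.1 * (p.2.1 ^ 2 - 2 * p.2.2.2 + p.2.2.1) = 0}

variable (K) in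
def a3Surface : Set (K × K × K) :=
  {q | q.1 ^ 4 + q.2.1 * q.2.2 = 0}

def toA3 (p : K × K × K × K) : K × K × K :=
  (p.2.1, p.2.2.1, p.2.1 ^ 2 + p.2.2.1 - 2 * p.2.2.2)

def ofA3 (q : K × K × K) : K × K × K × K :=
  (-q.2.1 - q.1 ^ 2 / 2, q.1, q.2.1, (q.1 ^ 2 + q.2.1 - q.2.2) / 2)

theorem mapsTo_toA3 : MapsTo toA3 (zeroFiber K) (a3Surface K) := by
  rintro ⟨a, b, c, d⟩ ⟨-, h⟩
  change b ^ 4 + c * (b ^ 2 + c - 2 * d) = 0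
  linear_combination h

variable [NeZero (2 : K)]

theorem toA3_ofA3 (q : K × K × K) : toA3 (ofA3 q) = q := by
  obtain ⟨x, y, z⟩ := q
  simp only [toA3, ofA3, Prod.mk.injEq, true_and]
  field_simp
  ring

theorem mapsTo_ofA3 : MapsTo ofA3 (a3Surface K) (zeroFiber K) := by
  rintro ⟨x, y, z⟩ (h : x ^ 4 + y * z = 0)
  refine ⟨rfl, ?_⟩
  change x ^ 4 + y * (x ^ 2 - 2 * ((x ^ 2 + y - z) / 2) + y) = 0
  field_simp
  linear_combination h

theorem leftInvOn_ofA3_toA3 : LeftInvOn ofA3 toA3 (zeroFiber K) := by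
  rintro ⟨a, b, c, d⟩ ⟨ha, -⟩
  simp only [toA3, ofA3, Prod.mk.injEq, true_and]
  refine ⟨ha.symm, ?_⟩
  field_simp
  ring

theorem bijOn_toA3 : BijOn toA3 (zeroFiber K) (a3Surface K) :=
  InvOn.bijOn ⟨leftInvOn_ofA3_toA3, fun q _ => toA3_ofA3 q⟩ mapsTo_toA3 mapsTo_ofA3

end SlodowySliceSO5

/-- The map `(a,b,c,d) ↦ (b, c, b² + c − 2d)` is a bijection from the zero fiber
`{a = −c − b²/2, b⁴ + c(b² − 2d + c) = 0}` of the adjoint quotient on the `𝔰𝔬(5,ℂ)`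
Slodowy slice onto the `A₃`-surface singularity `{x⁴ + yz = 0}`. -/
theorem zero_fiber_so5_is_A3 :
    Set.BijOn
      (fun p : ℂ × ℂ × ℂ × ℂ =>
        ((p.2.1, p.2.2.1, p.2.1 ^ 2 + p.2.2.1 - 2 * p.2.2.2) : ℂ × ℂ × ℂ))
      {p : ℂ × ℂ × ℂ × ℂ |
        p.1 = -p.2.2.1 - p.2.1 ^ 2 / 2 ∧
          p.2.1 ^ 4 + p.2.2.1 * (p.2.1 ^ 2 - 2 * p.2.2.2 + p.2.2.1) = 0}
      {q : ℂ × ℂ × ℂ | q.1 ^ 4 + q.2.1 * q.2.2 = 0} :=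
  SlodowySliceSO5.bijOn_toA3
end
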